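/- Fix μ ∈ ℝ, D > 0, V ∈ ℝ with μV ≠ 0, V_x ∈ ℝ, and α ∈ [0,1]. For h > 0 set Pe(h) = (μ/D)V·h, Q(h) = (μ/D)V_x·h²/2, Pe⁻(h) = Pe(h) + αQ(h) and P(h) = Pe(h)/2 − αQ(h)/4. Then the function h ↦ [((1 + αQ(h)/2)·exp(P(h)) − (1 + Pe⁻(h)/2))/(Pe⁻(h)·((1 + αQ(h))·exp(Pe(h)) − 1))] / W̃(Pe⁻(h), −αQ(h)/4) tends to 1 as h → 0 from the right, where W̃(z,q) = (exp(z/2 + q) − 1 − z/2)/(z·(exp(z) − 1)) for z ≠ 0. -/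

import Mathlib

/-- `W̃(z,q) = (exp(z/2 + q) − 1 − z/2) / (z (exp z − 1))` (for `z ≠ 0`). -/
noncomputable def Wtilde (z q : ℝ) : ℝ :=
  (Real.exp (z / 2 + q) - 1 - z / 2) / (z * (Real.exp z - 1))

/-!
With `Pe = c h` and `αQ = k h²` the quotient is `(F · E) / (G · C)`, where `F`, `C` are the
numerator and second denominator factor of the exact coefficient and `G`, `E` those of `W̃`.
Both `C` and `E` are `c h + O(h²)`. The numerators differ by `-exp P · (exp(k h²/2) - 1 - k h²/2)`,
which is `O(h⁴)`, while `G = (c²/8 - k/4) h² + (c k/8 + c³/48) h³ + O(h⁴)` and the two coefficients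
cannot vanish together when `c ≠ 0` (for `k = c²/2` the cubic one is `c³/12`). Hence `F ~ G` and `E ~ C` as `h → 0`.
-/

open Real Filter Asymptotics Topology

namespace Real

lemma exp_sub_one_sub_id_isBigO_sq : (fun x : ℝ => exp x - 1 - x) =O[𝓝 0] (· ^ 2) := by
  simpa [Finset.sum_range_succ, sub_sub] using exp_sub_sum_range_isBigO_pow 2

lemma exp_sub_cubic_isBigO_pow_four :
    (fun x : ℝ => exp x - (1 + x + x ^ 2 / 2 + x ^ 3 / 6)) =O[𝓝 0] (· ^ 4) := by
  convert exp_sub_sum_range_isBigO_pow 4 using 3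
  simp [Finset.sum_range_succ, Nat.factorial]

end Real

lemma isBigO_pow_mul_of_continuousAt {r : ℝ → ℝ} (hr : ContinuousAt r 0) (n : ℕ) :
    (fun x => x ^ n * r x) =O[𝓝 0] (· ^ n) := by
  simpa using (isBigO_refl (· ^ n) (𝓝 (0 : ℝ))).mul (hr.tendsto.isBigO_one ℝ)

lemma Asymptotics.IsBigO.comp_isBigO_pow {α : Type*} {l : Filter α} {f : ℝ → ℝ} {n : ℕ}
    (hf : f =O[𝓝 0] (· ^ n)) {g φ : α → ℝ} (hg : g =O[l] φ) (hφ : Tendsto φ l (𝓝 0)) :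
    (fun x => f (g x)) =O[l] fun x => φ x ^ n :=
  (hf.comp_tendsto (hg.trans_tendsto hφ)).trans (hg.pow n)

lemma Asymptotics.IsEquivalent.eventually_ne_zero {α : Type*} {l : Filter α} {u v : α → ℝ}
    (h : u ~[l] v) (hv : ∀ᶠ x in l, v x ≠ 0) : ∀ᶠ x in l, u x ≠ 0 := by
  filter_upwards [h.isBigO_symm.eq_zero_imp, hv] with x hvu hvx hux using hvx (hvu hux)

lemma isEquivalent_const_mul_id_of_sub_isBigO_sq {f : ℝ → ℝ} {c : ℝ} (hc : c ≠ 0)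
    (hf : (fun h => f h - c * h) =O[𝓝 0] (· ^ 2)) : f ~[𝓝 0] fun h => c * h :=
  hf.trans_isLittleO ((isLittleO_pow_id one_lt_two).trans_isBigO (isBigO_self_const_mul hc _ _))

lemma isLittleO_pow_four_quadratic_add_cubic {a b : ℝ} (hab : a ≠ 0 ∨ b ≠ 0) :
    (fun x : ℝ => x ^ 4) =o[𝓝[≠] 0] fun x => a * x ^ 2 + b * x ^ 3 := by
  have key : (fun x : ℝ => x ^ 2) =o[𝓝[≠] 0] fun x => a + b * x := by
    by_cases ha : a = 0
    · subst ha
      have hb := hab.resolve_left fun h => h rfl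
      simpa using ((isLittleO_pow_id one_lt_two).trans_isBigO
        (isBigO_self_const_mul hb _ _)).mono nhdsWithin_le_nhds
    · have hlin : (fun x : ℝ => a + b * x) ~[𝓝 0] fun _ => a :=
        (isEquivalent_const_iff_tendsto ha).2 (by
          simpa using (by fun_prop : Continuous fun x : ℝ => a + b * x).tendsto 0)
      refine ((isLittleO_one_iff ℝ).2 ?_).trans_isBigO
        ((isBigO_const_const 1 ha _).trans hlin.isBigO_symm) |>.mono nhdsWithin_le_nhds
      simpa using (continuous_pow 2).tendsto (0 : ℝ)
  exact ((isBigO_refl (fun x : ℝ => x ^ 2) _).mul_isLittleO key).congr (fun x => by ring)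
    (fun x => by ring)

section FluxCoefficients

variable (c k : ℝ)

lemma const_mul_add_isBigO_id : (fun h : ℝ => c * h + k * h ^ 2) =O[𝓝 0] fun h => h := by
  simpa [pow_one] using (isBigO_pow_mul_of_continuousAt (r := fun h => c + k * h)
    (by fun_prop) 1).congr_left (fun h => by ring)

lemma wtildeNum_sub_poly_isBigO :
    (fun h : ℝ => exp (c * h / 2 + k * h ^ 2 / 4) - 1 - (c * h + k * h ^ 2) / 2 -
      ((c ^ 2 / 8 - k / 4) * h ^ 2 + (c * k / 8 + c ^ 3 / 48) * h ^ 3)) =O[𝓝 0] (· ^ 4) := by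
  have htaylor := exp_sub_cubic_isBigO_pow_four.comp_isBigO_pow
    (const_mul_add_isBigO_id (c / 2) (k / 4)) tendsto_id
  -- the cubic Taylor polynomial at `c h / 2 + k h² / 4`, minus the target, is `h ^ 4` times this
  have hpoly := isBigO_pow_mul_of_continuousAt
    (r := fun h => k ^ 2 / 32 + c ^ 2 * k / 32 + c * k ^ 2 * h / 64 + k ^ 3 * h ^ 2 / 384)
    (by fun_prop) 4
  exact (htaylor.add hpoly).congr_left (fun h => by ring_nf)

lemma exactNum_sub_wtildeNum_isBigO :
    (fun h : ℝ => ((1 + k * h ^ 2 / 2) * exp (c * h / 2 - k * h ^ 2 / 4) -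
      (1 + (c * h + k * h ^ 2) / 2)) -
      (exp (c * h / 2 + k * h ^ 2 / 4) - 1 - (c * h + k * h ^ 2) / 2)) =O[𝓝 0] (· ^ 4) := by
  have hw : (fun h : ℝ => k * h ^ 2 / 2) =O[𝓝 0] (· ^ 2) :=
    (isBigO_const_mul_self (k / 2) _ _).congr_left (fun h => by ring)
  have hR := exp_sub_one_sub_id_isBigO_sq.comp_isBigO_pow hw
    (by simpa using (continuous_pow 2).tendsto (0 : ℝ))
  have hexp : (fun h : ℝ => exp (c * h / 2 - k * h ^ 2 / 4)) =O[𝓝 0] fun _ => (1 : ℝ) :=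
    ((by fun_prop : Continuous fun h : ℝ => exp (c * h / 2 - k * h ^ 2 / 4)).tendsto 0).isBigO_one ℝ
  refine (hexp.mul hR).neg_left.congr (fun h => ?_) (fun h => by ring)
  rw [show c * h / 2 + k * h ^ 2 / 4 = (c * h / 2 - k * h ^ 2 / 4) + k * h ^ 2 / 2 by ring, exp_add]
  ring

variable {c}

lemma exactDen_isEquivalent (hc : c ≠ 0) :
    (fun h : ℝ => (1 + k * h ^ 2) * exp (c * h) - 1) ~[𝓝 0] fun h => c * h := by
  refine isEquivalent_const_mul_id_of_sub_isBigO_sq hc ?_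
  have hR := exp_sub_one_sub_id_isBigO_sq.comp_isBigO_pow
    (isBigO_const_mul_self c (fun h : ℝ => h) _) tendsto_id
  exact (hR.add (isBigO_pow_mul_of_continuousAt (r := fun h => k * exp (c * h)) (by fun_prop) 2))
    |>.congr_left (fun h => by ring)

lemma wtildeDen_isEquivalent (hc : c ≠ 0) :
    (fun h : ℝ => exp (c * h + k * h ^ 2) - 1) ~[𝓝 0] fun h => c * h := by
  refine isEquivalent_const_mul_id_of_sub_isBigO_sq hc ?_
  have hR := exp_sub_one_sub_id_isBigO_sq.comp_isBigO_pow (const_mul_add_isBigO_id c k) tendsto_id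
  exact (hR.add (isBigO_const_mul_self k (· ^ 2) _)).congr_left (fun h => by ring)

lemma peclet_isEquivalent (hc : c ≠ 0) :
    (fun h : ℝ => c * h + k * h ^ 2) ~[𝓝 0] fun h => c * h :=
  isEquivalent_const_mul_id_of_sub_isBigO_sq hc
    ((isBigO_const_mul_self k (· ^ 2) _).congr_left (fun h => by ring))

lemma quadratic_or_cubic_coeff_ne_zero (hc : c ≠ 0) :
    c ^ 2 / 8 - k / 4 ≠ 0 ∨ c * k / 8 + c ^ 3 / 48 ≠ 0 := by
  by_contra! ⟨h2, h3⟩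
  have hk : k = c ^ 2 / 2 := by linarith
  rw [hk] at h3
  exact hc (pow_eq_zero_iff three_ne_zero |>.1 (by linear_combination 12 * h3))

lemma isLittleO_pow_four_wtildeNum_poly (hc : c ≠ 0) :
    (fun h : ℝ => h ^ 4) =o[𝓝[≠] 0]
      fun h => (c ^ 2 / 8 - k / 4) * h ^ 2 + (c * k / 8 + c ^ 3 / 48) * h ^ 3 :=
  isLittleO_pow_four_quadratic_add_cubic (quadratic_or_cubic_coeff_ne_zero k hc)

lemma wtildeNum_isEquivalent_poly (hc : c ≠ 0) :
    (fun h : ℝ => exp (c * h / 2 + k * h ^ 2 / 4) - 1 - (c * h + k * h ^ 2) / 2) ~[𝓝[≠] 0]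
      fun h => (c ^ 2 / 8 - k / 4) * h ^ 2 + (c * k / 8 + c ^ 3 / 48) * h ^ 3 :=
  ((wtildeNum_sub_poly_isBigO c k).mono nhdsWithin_le_nhds).trans_isLittleO
    (isLittleO_pow_four_wtildeNum_poly k hc)

lemma exactNum_isEquivalent_wtildeNum (hc : c ≠ 0) :
    (fun h : ℝ => (1 + k * h ^ 2 / 2) * exp (c * h / 2 - k * h ^ 2 / 4) -
      (1 + (c * h + k * h ^ 2) / 2)) ~[𝓝[≠] 0]
      fun h => exp (c * h / 2 + k * h ^ 2 / 4) - 1 - (c * h + k * h ^ 2) / 2 :=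
  ((exactNum_sub_wtildeNum_isBigO c k).mono nhdsWithin_le_nhds).trans_isLittleO
    ((isLittleO_pow_four_wtildeNum_poly k hc).trans_isBigO
      (wtildeNum_isEquivalent_poly k hc).isBigO_symm)

theorem tendsto_exactCoeff_div_Wtilde (hc : c ≠ 0) :
    Tendsto (fun h : ℝ => ((1 + k * h ^ 2 / 2) * exp (c * h / 2 - k * h ^ 2 / 4) -
        (1 + (c * h + k * h ^ 2) / 2)) /
        ((c * h + k * h ^ 2) * ((1 + k * h ^ 2) * exp (c * h) - 1)) /
        Wtilde (c * h + k * h ^ 2) (-(k * h ^ 2) / 4)) (𝓝[≠] 0) (𝓝 1) := by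
  have hpunct : 𝓝[≠] (0 : ℝ) ≤ 𝓝 0 := nhdsWithin_le_nhds
  have hh : ∀ᶠ h in 𝓝[≠] (0 : ℝ), h ≠ 0 := self_mem_nhdsWithin
  have hden_ne : ∀ᶠ h in 𝓝[≠] (0 : ℝ),
      (exp (c * h / 2 + k * h ^ 2 / 4) - 1 - (c * h + k * h ^ 2) / 2) *
        ((1 + k * h ^ 2) * exp (c * h) - 1) ≠ 0 := by
    refine ((wtildeNum_isEquivalent_poly k hc).mul
      ((exactDen_isEquivalent k hc).mono hpunct)).eventually_ne_zero ?_
    filter_upwards [(isLittleO_pow_four_wtildeNum_poly k hc).isBigO.eq_zero_imp, hh] with h hp hh0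
    exact mul_ne_zero (fun h0 => pow_ne_zero 4 hh0 (hp h0)) (mul_ne_zero hc hh0)
  have hpeclet_ne := ((peclet_isEquivalent k hc).mono hpunct).eventually_ne_zero
    (by filter_upwards [hh] with h hh0 using mul_ne_zero hc hh0)
  have hden : (fun h : ℝ => exp (c * h + k * h ^ 2) - 1) ~[𝓝[≠] 0]
      fun h => (1 + k * h ^ 2) * exp (c * h) - 1 :=
    ((wtildeDen_isEquivalent k hc).trans (exactDen_isEquivalent k hc).symm).mono hpunct
  refine ((isEquivalent_iff_tendsto_one hden_ne).1
    ((exactNum_isEquivalent_wtildeNum k hc).mul hden)).congr' ?_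
  filter_upwards [hpeclet_ne] with h hz
  rw [Pi.div_apply, Pi.mul_apply, Wtilde,
    show (c * h + k * h ^ 2) / 2 + -(k * h ^ 2) / 4 = c * h / 2 + k * h ^ 2 / 4 by ring]
  generalize c * h + k * h ^ 2 = z at hz ⊢
  field_simp

end FluxCoefficients

theorem asymptotic_sjp1_coefficient_minus_general (μ D V Vx α : ℝ)
    (hD : D > 0) (hμV : μ * V ≠ 0) :
    Filter.Tendsto
      (fun h : ℝ =>
        let Pe := (μ / D) * V * h
        let Q := (μ / D) * Vx * h ^ 2 / 2
        let Pem := Pe + α * Q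
        let P := Pe / 2 - α * Q / 4
        (((1 + α * Q / 2) * Real.exp P - (1 + Pem / 2)) /
          (Pem * ((1 + α * Q) * Real.exp Pe - 1))) /
          Wtilde Pem (-(α * Q) / 4))
      (nhdsWithin 0 (Set.Ioi 0)) (nhds 1) := by
  have hc : μ / D * V ≠ 0 := by
    rw [div_mul_eq_mul_div]
    exact div_ne_zero hμV hD.ne'
  refine ((tendsto_exactCoeff_div_Wtilde (α * (μ / D * Vx) / 2) hc).mono_left
    (nhdsWithin_mono _ fun h (hh : 0 < h) => hh.ne')).congr fun h => ?_
  dsimp only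
  rw [show α * (μ / D * Vx * h ^ 2 / 2) = α * (μ / D * Vx) / 2 * h ^ 2 by ring]

theorem asymptotic_sjp1_coefficient_minus (μ D V Vx α : ℝ)
    (hD : D > 0) (hμV : μ * V ≠ 0) (hα : α ∈ Set.Icc (0:ℝ) 1) :
    Filter.Tendsto
      (fun h : ℝ =>
        let Pe := (μ / D) * V * h
        let Q := (μ / D) * Vx * h ^ 2 / 2
        let Pem := Pe + α * Q
        let P := Pe / 2 - α * Q / 4
        (((1 + α * Q / 2) * Real.exp P - (1 + Pem / 2)) /
          (Pem * ((1 + α * Q) * Real.exp Pe - 1))) /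
          Wtilde Pem (-(α * Q) / 4))
      (nhdsWithin 0 (Set.Ioi 0)) (nhds 1) :=
  asymptotic_sjp1_coefficient_minus_general μ D V Vx α hD hμV
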